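/- Consider the Ising model, i.e. I_x = I for all x ∈ ℤ with a fixed real I, let β > 0, τ = e^{−β I} and χ = τ^2 = e^{−2β I}. Then for all integers n ≥ 1 and 0 ≤ r ≤ n, the mixed-boundary crystal partition function is expressed through the minus-boundary ones by Y^r_n = χ^{−1/2}·( X^{r+1}_{n+1} − X^{r+1}_n ), with the convention X^s_{n'} = 0 whenever s > n'. -/

import Mathlib

open Finset

/-- Spin configurations on `{1, …, n}`, encoded as boolean functions
(`true` ↔ spin `+1`, `false` ↔ spin `-1`). -/
abbrev Config (n : ℕ) := {x // x ∈ Finset.Icc 1 n} → Bool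

/-- The spin value `±1` of the configuration `σ` at the site `x` (value `1` off the box). -/
noncomputable def spin {n : ℕ} (σ : Config n) (x : ℕ) : ℝ :=
  if h : x ∈ Finset.Icc 1 n then (if σ ⟨x, h⟩ then 1 else -1) else 1

/-- The number `N_+(σ)` of sites where `σ` takes the value `+1`. -/
def Nplus {n : ℕ} (σ : Config n) : ℕ :=
  (Finset.univ.filter fun x => σ x = true).card

/-- The Ising Hamiltonian `H^-` on `{1, …, n}` with minus boundary spin on
both sides. -/
noncomputable def Hminus (I : ℝ) (n : ℕ) (σ : Config n) : ℝ :=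
  I * ((∑ x ∈ Finset.Icc 2 n, (if spin σ (x - 1) ≠ spin σ x then 1 else 0))
        + (if spin σ 1 ≠ -1 then 1 else 0)
        + (if spin σ n ≠ -1 then 1 else 0))

/-- The crystal partition function `X^r_n` of the Ising model (minus boundary
on both sides), defined for every integer `r`; it vanishes automatically when
`r < 0` or `r > n`. -/
noncomputable def X (β I : ℝ) (n : ℕ) (r : ℤ) : ℝ :=
  ∑ σ ∈ Finset.univ.filter (fun σ : Config n => (Nplus σ : ℤ) = r),
    Real.exp (-β * Hminus I n σ)

/-- The Ising Hamiltonian `H^∓` on `{1, …, n}`: minus boundary spin on the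
left, plus boundary spin on the right. -/
noncomputable def Hmp (I : ℝ) (n : ℕ) (σ : Config n) : ℝ :=
  I * ((∑ x ∈ Finset.Icc 2 n, (if spin σ (x - 1) ≠ spin σ x then 1 else 0))
        + (if spin σ 1 ≠ -1 then 1 else 0)
        + (if spin σ n ≠ 1 then 1 else 0))

/-- The crystal partition function `Y^r_n` of the Ising model (minus boundary
on the left, plus on the right). -/
noncomputable def Y (β I : ℝ) (n : ℕ) (r : ℤ) : ℝ :=
  ∑ σ ∈ Finset.univ.filter (fun σ : Config n => (Nplus σ : ℤ) = r),
    Real.exp (-β * Hmp I n σ)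

/-!
Split `X^{r+1}_{n+1}` according to the spin at the site `n + 1`. If it is `-1`, the bond to the
right `-` boundary is not broken and the configuration on `{1, …, n}` contributes to `X^{r+1}_n`.
If it is `+1`, the site `n + 1` acts as a `+` boundary for `{1, …, n}` and breaks one more bond,
with the `-` boundary, so these configurations contribute `τ Y^r_n`. Hence
`X^{r+1}_{n+1} = τ Y^r_n + X^{r+1}_n`, and `χ^{-1/2} = τ⁻¹`.
-/

namespace Config

variable {n : ℕ}

def snoc (σ : Config n) (b : Bool) : Config (n + 1) := fun x =>
  if h : x.1 ≤ n then σ ⟨x.1, Finset.mem_Icc.2 ⟨(Finset.mem_Icc.1 x.2).1, h⟩⟩ else b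

def snocEquiv (n : ℕ) : Config n × Bool ≃ Config (n + 1) where
  toFun p := p.1.snoc p.2
  invFun σ := (fun x => σ ⟨x.1, Finset.mem_Icc.2 ⟨(Finset.mem_Icc.1 x.2).1,
      (Finset.mem_Icc.1 x.2).2.trans n.le_succ⟩⟩, σ ⟨n + 1, by simp⟩)
  left_inv := by
    rintro ⟨σ, b⟩
    ext x
    · simp [snoc, (Finset.mem_Icc.1 x.2).2]
    · simp [snoc]
  right_inv σ := by
    funext x
    by_cases hx : x.1 ≤ n
    · simp [snoc, hx]
    · have hlast : x = ⟨n + 1, by simp⟩ :=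
        Subtype.ext (by show x.1 = n + 1; have := Finset.mem_Icc.1 x.2; omega)
      simp [snoc, hlast]

theorem sum_succ {M : Type*} [AddCommMonoid M] (f : Config (n + 1) → M) :
    ∑ σ, f σ = ∑ σ : Config n, (f (σ.snoc false) + f (σ.snoc true)) := by
  rw [← (snocEquiv n).sum_comp, Fintype.sum_prod_type]
  simp [snocEquiv, add_comm]

end Config

section Snoc

variable {n : ℕ}

theorem spin_snoc_of_le (σ : Config n) (b : Bool) {x : ℕ} (hx : x ≤ n) :
    spin (σ.snoc b) x = spin σ x := by
  by_cases h : 1 ≤ x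
  · simp [spin, Config.snoc, h, hx, hx.trans n.le_succ]
  · simp [spin, h]

theorem spin_snoc_succ (σ : Config n) (b : Bool) :
    spin (σ.snoc b) (n + 1) = if b then 1 else -1 := by
  simp [spin, Config.snoc]

theorem Nplus_eq_sum (σ : Config n) :
    Nplus σ = ∑ x ∈ Finset.Icc 1 n, if spin σ x = 1 then 1 else 0 := by
  rw [Nplus, Finset.card_filter, ← Finset.sum_attach (Finset.Icc 1 n)]
  refine Finset.sum_congr rfl fun x _ => ?_
  cases hσ : σ x <;> norm_num [spin, hσ]

theorem Nplus_snoc (σ : Config n) (b : Bool) :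
    Nplus (σ.snoc b) = Nplus σ + b.toNat := by
  rw [Nplus_eq_sum, Nplus_eq_sum, Finset.sum_Icc_succ_top (by omega), spin_snoc_succ]
  congr 1
  · exact Finset.sum_congr rfl fun x hx => by rw [spin_snoc_of_le σ b (Finset.mem_Icc.1 hx).2]
  · cases b <;> norm_num

theorem bonds_snoc (σ : Config n) (b : Bool) (hn : 1 ≤ n) :
    ((∑ x ∈ Finset.Icc 2 (n + 1), if spin (σ.snoc b) (x - 1) ≠ spin (σ.snoc b) x then 1 else 0)
        + if spin (σ.snoc b) 1 ≠ -1 then 1 else 0)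
      = (∑ x ∈ Finset.Icc 2 n, if spin σ (x - 1) ≠ spin σ x then (1 : ℝ) else 0)
        + (if spin σ 1 ≠ -1 then 1 else 0)
        + if spin σ n ≠ (if b then 1 else -1) then 1 else 0 := by
  rw [Finset.sum_Icc_succ_top (by omega), Nat.add_sub_cancel, spin_snoc_succ,
    spin_snoc_of_le σ b le_rfl, spin_snoc_of_le σ b hn]
  have hbulk : ∀ x ∈ Finset.Icc 2 n,
      spin (σ.snoc b) (x - 1) = spin σ (x - 1) ∧ spin (σ.snoc b) x = spin σ x := fun x hx =>
    ⟨spin_snoc_of_le σ b (by have := Finset.mem_Icc.1 hx; omega),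
      spin_snoc_of_le σ b (Finset.mem_Icc.1 hx).2⟩
  rw [Finset.sum_congr rfl fun x hx => by rw [(hbulk x hx).1, (hbulk x hx).2]]
  ring

theorem Hminus_snoc_false (I : ℝ) (σ : Config n) (hn : 1 ≤ n) :
    Hminus I (n + 1) (σ.snoc false) = Hminus I n σ := by
  rw [Hminus, bonds_snoc σ false hn, spin_snoc_succ, Hminus]
  norm_num

theorem Hminus_snoc_true (I : ℝ) (σ : Config n) (hn : 1 ≤ n) :
    Hminus I (n + 1) (σ.snoc true) = Hmp I n σ + I := by
  rw [Hminus, bonds_snoc σ true hn, spin_snoc_succ, Hmp]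
  norm_num [mul_add]

end Snoc

theorem X_succ (β I : ℝ) {n : ℕ} (hn : 1 ≤ n) (r : ℕ) :
    X β I (n + 1) (r + 1) = Real.exp (-β * I) * Y β I n r + X β I n (r + 1) := by
  simp only [X, Y, Finset.sum_filter, Finset.mul_sum, Config.sum_succ, Finset.sum_add_distrib,
    Nplus_snoc, Hminus_snoc_false I _ hn, Hminus_snoc_true I _ hn]
  rw [add_comm]
  congr 1
  refine Finset.sum_congr rfl fun σ _ => ?_
  simp only [Bool.toNat_true, Nat.cast_add_one, add_left_inj, mul_ite, mul_zero, ← Real.exp_add]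
  ring_nf

theorem stmt_12_general (β I : ℝ) (n : ℕ) (hn : 1 ≤ n)
    (r : ℕ) :
    Y β I n (r : ℤ) = Real.exp (-2 * β * I) ^ (-(1 / 2) : ℝ)
        * (X β I (n + 1) ((r : ℤ) + 1) - X β I n ((r : ℤ) + 1)) := by
  have hχ : Real.exp (-2 * β * I) ^ (-(1 / 2) : ℝ) = Real.exp (β * I) := by
    rw [← Real.exp_mul]
    ring_nf
  rw [hχ, X_succ β I hn r, add_sub_cancel_right, ← mul_assoc, ← Real.exp_add]
  simp

/-- The mixed-boundary crystal partition function of the Ising model is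
expressed through the minus-boundary ones:
`Y^r_n = χ^{-1/2} (X^{r+1}_{n+1} - X^{r+1}_n)` with `χ = e^{-2βI}`
(here `X^s_{n'} = 0` automatically whenever `s > n'`). -/
theorem stmt_12 (β I : ℝ) (hβ : 0 < β) (n : ℕ) (hn : 1 ≤ n)
    (r : ℕ) (hr : r ≤ n) :
    Y β I n (r : ℤ) = Real.exp (-2 * β * I) ^ (-(1 / 2) : ℝ)
        * (X β I (n + 1) ((r : ℤ) + 1) - X β I n ((r : ℤ) + 1)) :=
  stmt_12_general β I n hn r
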